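/- Under the droplet dynamics dRᵢ/dt = -1/Rᵢ² + ū/Rᵢ (all radii positive) with ū = N/(Σᵢ Rᵢ), the energy F = Σᵢ ½Rᵢ² satisfies dF/dt = -Σᵢ (1/Rᵢ)·(1 - ū·Rᵢ)² ≤ 0. -/

import Mathlib

open Finset

/-! Along the flow, `d/dt ½Rᵢ² = Rᵢ Ṙᵢ = ū - 1/Rᵢ`. Expanding
`(1/Rᵢ)(1 - ūRᵢ)² = 1/Rᵢ - 2ū + ū²Rᵢ` and using the volume constraint `ū Σⱼ Rⱼ = N`
turns `-Σᵢ (1/Rᵢ)(1 - ūRᵢ)²` into `Σᵢ (ū - 1/Rᵢ)`; the squared form shows it is `≤ 0`. -/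

section

variable {ι : Type*} [Fintype ι]

theorem hasDerivAt_sum_half_sq {R : ι → ℝ → ℝ} {t : ℝ} {v : ι → ℝ}
    (hR : ∀ i, HasDerivAt (R i) (v i) t) :
    HasDerivAt (fun s => ∑ i, (1 / 2) * R i s ^ 2) (∑ i, R i t * v i) t := by
  refine HasDerivAt.fun_sum fun i _ => ?_
  exact (((hR i).fun_pow 2).const_mul (1 / 2 : ℝ)).congr_deriv (by push_cast; ring)

theorem card_div_sum_mul_sum (r : ι → ℝ) (hr : ∀ i, 0 < r i) :
    (Fintype.card ι / ∑ i, r i) * ∑ i, r i = Fintype.card ι := by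
  cases isEmpty_or_nonempty ι
  · simp
  · exact div_mul_cancel₀ _ (sum_pos (fun i _ => hr i) univ_nonempty).ne'

theorem sum_inv_mul_one_sub_mul_sq (r : ι → ℝ) (hr : ∀ i, r i ≠ 0) {u : ℝ}
    (hu : u * ∑ i, r i = Fintype.card ι) :
    ∑ i, (1 / r i) * (1 - u * r i) ^ 2 = ∑ i, (1 / r i - u) := by
  have expand : ∀ i, (1 / r i) * (1 - u * r i) ^ 2 = 1 / r i - 2 * u + u ^ 2 * r i := by
    intro i
    field_simp [hr i]
    ring
  simp only [expand, sum_add_distrib, sum_sub_distrib, ← mul_sum, sum_const, card_univ,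
    nsmul_eq_mul]
  linear_combination u * hu

end

/-- Under the droplet dynamics `dRᵢ/dt = -1/Rᵢ² + ū/Rᵢ` (all radii positive)
with `ū = N/(Σᵢ Rᵢ)`, the energy `F = Σᵢ ½Rᵢ²` satisfies
`dF/dt = -Σᵢ (1/Rᵢ)·(1 - ū·Rᵢ)² ≤ 0`. -/
theorem droplet_energy_dissipation (N : ℕ) (R : Fin N → ℝ → ℝ) (u : ℝ → ℝ)
    (hu : ∀ s, u s = (N : ℝ) / ∑ j, R j s)
    (t : ℝ) (hpos : ∀ i, 0 < R i t)
    (hode : ∀ i, HasDerivAt (R i) (-1 / (R i t) ^ 2 + u t / R i t) t) :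
    HasDerivAt (fun s => ∑ i, (1 / 2) * (R i s) ^ 2)
        (-∑ i, (1 / R i t) * (1 - u t * R i t) ^ 2) t ∧
      (-∑ i, (1 / R i t) * (1 - u t * R i t) ^ 2) ≤ 0 := by
  have volume : u t * ∑ j, R j t = Fintype.card (Fin N) := by
    simpa [hu t] using card_div_sum_mul_sum (fun j => R j t) hpos
  have velocity : ∀ i, R i t * (-1 / R i t ^ 2 + u t / R i t) = -(1 / R i t - u t) := by
    intro i
    field_simp [(hpos i).ne']
    ring
  refine ⟨?_, neg_nonpos.2 (sum_nonneg fun i _ => by have := hpos i; positivity)⟩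
  rw [sum_inv_mul_one_sub_mul_sq _ (fun i => (hpos i).ne') volume, ← sum_neg_distrib]
  simpa only [velocity] using hasDerivAt_sum_half_sq hode
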